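/- Kinetic energy balance of the Vlasov step (key step in the proof of Theorem 2.1): the magnetic force does no work. Let E^n, E^{n+1}, B̄ be spatial vector fields and let f^n, f^{n+1/2}, f^{n+1} be phase-space functions satisfying (f^{n+1} − f^n)/Δt + v·∇_x f^{n+1/2} + ((E^n + E^{n+1})/2 + v×B̄)·∇_v f^{n+1/2} = 0. Then ∫_Ωx ∫_Ωv (f^{n+1} − f^n) |v|² dv dx = Δt ∫_Ωx (E^n + E^{n+1})·J^{n+1/2} dx, where J^{n+1/2}(x) = ∫_Ωv f^{n+1/2}(x,v) v dv. -/

import Mathlib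

open MeasureTheory Matrix

noncomputable section

/-- Points of `ℝ³`. -/
abbrev V3 : Type := Fin 3 → ℝ

/-- Partial derivative in the `i`-th coordinate direction. -/
def pd (i : Fin 3) (g : V3 → ℝ) (x : V3) : ℝ := fderiv ℝ g x (Pi.single i 1)

/-- Curl of a vector field on `ℝ³`. -/
def curl (U : V3 → V3) (x : V3) : V3 :=
  ![pd 1 (fun y => U y 2) x - pd 2 (fun y => U y 1) x,
    pd 2 (fun y => U y 0) x - pd 0 (fun y => U y 2) x,
    pd 0 (fun y => U y 1) x - pd 1 (fun y => U y 0) x]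

/-- Gradient in the `x`-variable of a phase-space function. -/
def gradX (f : V3 → V3 → ℝ) (x v : V3) : V3 :=
  fun i => fderiv ℝ (fun y => f y v) x (Pi.single i 1)

/-- Gradient in the `v`-variable of a phase-space function. -/
def gradV (f : V3 → V3 → ℝ) (x v : V3) : V3 :=
  fun i => fderiv ℝ (fun w => f x w) v (Pi.single i 1)

/-- The period box `[0,L]³`. -/
def box (L : ℝ) : Set V3 := Set.Icc 0 (fun _ => L)

/-- A spatial vector field: smooth and `L`-periodic. -/
def IsSpatialVF (L : ℝ) (U : V3 → V3) : Prop :=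
  ContDiff ℝ (⊤ : ℕ∞) U ∧ ∀ (x : V3) (i : Fin 3), U (x + L • (Pi.single i (1:ℝ) : V3)) = U x

/-- A phase-space function: smooth, `L`-periodic in `x`, compactly supported in `v`
(uniformly in `x`). -/
def IsPhase (L : ℝ) (f : V3 → V3 → ℝ) : Prop :=
  ContDiff ℝ (⊤ : ℕ∞) (fun p : V3 × V3 => f p.1 p.2) ∧
  (∀ (x v : V3) (i : Fin 3), f (x + L • (Pi.single i (1:ℝ) : V3)) v = f x v) ∧
  ∃ R : ℝ, ∀ (x v : V3), R ≤ ‖v‖ → f x v = 0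

/-- Current density `J(x) = ∫ f(x,v) v dv`. -/
def Jcur (f : V3 → V3 → ℝ) (x : V3) : V3 := ∫ v : V3, f x v • v

/-- Kinetic energy `∫_Ωx ∫_Ωv f |v|² dv dx`. -/
def kinE (L : ℝ) (f : V3 → V3 → ℝ) : ℝ :=
  ∫ x in box L, ∫ v : V3, f x v * (v ⬝ᵥ v)

/-- Field energy `∫_Ωx |U|² dx`. -/
def fieldE (L : ℝ) (U : V3 → V3) : ℝ := ∫ x in box L, U x ⬝ᵥ U x


section VlasovAux

open Set Function


/-- Divergence theorem: integral of divergence over the period box of a periodic C¹ family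
vanishes. -/
lemma integral_box_div_eq_zero (L : ℝ) (hL : 0 ≤ L) (F : Fin 3 → V3 → ℝ)
    (hF : ∀ i, ContDiff ℝ 1 (F i))
    (hper : ∀ i (x : V3) (j : Fin 3), F i (x + L • (Pi.single j (1:ℝ) : V3)) = F i x) :
    ∫ x in box L, ∑ i, fderiv ℝ (F i) x (Pi.single i 1) = 0 := by
  have hle : (0 : V3) ≤ (fun _ => L) := fun i => hL
  have key := MeasureTheory.integral_divergence_of_hasFDerivAt_off_countable'
    (0 : V3) (fun _ => L) hle F (fun i x => fderiv ℝ (F i) x) ∅ countable_empty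
    (fun i => (hF i).continuous.continuousOn)
    (fun x _ i => ((hF i).differentiable one_ne_zero x).hasFDerivAt)
    ?_
  · rw [box]
    rw [key]
    apply Finset.sum_eq_zero
    intro i _
    have : ∀ x : Fin 2 → ℝ,
        i.insertNth ((fun _ => L : V3) i) x = i.insertNth ((0:V3) i) x + L • (Pi.single i (1:ℝ) : V3) := by
      intro x
      funext j
      rcases eq_or_ne j i with rfl | hne
      · simp
      · obtain ⟨k, rfl⟩ := Fin.exists_succAbove_eq hne
        simp [Fin.insertNth_apply_succAbove, Pi.single_apply, (Fin.succAbove_ne i k)]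
    have h2 : ∀ x : Fin 2 → ℝ, F i (i.insertNth ((fun _ => L : V3) i) x)
        = F i (i.insertNth ((0:V3) i) x) := by
      intro x; rw [this x, hper]
    simp only [h2, sub_self]
  · apply ContinuousOn.integrableOn_compact isCompact_Icc
    apply Continuous.continuousOn
    apply continuous_finset_sum
    intro i _
    exact (ContinuousLinearMap.apply ℝ ℝ (Pi.single i 1 : V3)).continuous.comp
      ((hF i).continuous_fderiv one_ne_zero)

/-- Integral over ℝ³ of a divergence of a compactly supported C¹ family vanishes. -/
lemma integral_div_eq_zero_of_support (R : ℝ) (F : Fin 3 → V3 → ℝ)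
    (hF : ∀ i, ContDiff ℝ 1 (F i))
    (hsupp : ∀ i (v : V3), R ≤ ‖v‖ → F i v = 0) :
    ∫ v : V3, ∑ i, fderiv ℝ (F i) v (Pi.single i 1) = 0 := by
  set M : ℝ := max R 0 + 1 with hM
  have hRM : R < M := lt_of_le_of_lt (le_max_left _ _) (by linarith [le_refl (max R 0)])
  have hM0 : 0 < M := lt_of_le_of_lt (le_max_right _ _) (by linarith)
  set a : V3 := fun _ => -M
  set b : V3 := fun _ => M
  have hle : a ≤ b := fun i => by simp [a, b]; linarith
  -- the integrand vanishes outside Icc a b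
  have hvanish : ∀ v : V3, v ∉ Icc a b → (∑ i, fderiv ℝ (F i) v (Pi.single i 1)) = 0 := by
    intro v hv
    have hnorm : R < ‖v‖ := by
      rw [Set.mem_Icc] at hv
      have : ∃ j, ¬ (a j ≤ v j ∧ v j ≤ b j) := by
        by_contra h
        push_neg at h
        exact hv ⟨fun j => (h j).1, fun j => (h j).2⟩
      obtain ⟨j, hj⟩ := this
      have : M < |v j| := by
        simp only [a, b] at hj
        rcases not_and_or.mp hj with h | h
        · push_neg at h; rw [abs_of_neg (by linarith)]; linarith
        · push_neg at h; rw [abs_of_pos (by linarith)]; linarith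
      calc R < M := hRM
        _ < |v j| := this
        _ ≤ ‖v‖ := by simpa using norm_le_pi_norm v j
    apply Finset.sum_eq_zero
    intro i _
    have hev : (F i) =ᶠ[nhds v] (fun _ => 0) := by
      have hop : IsOpen {w : V3 | R < ‖w‖} := isOpen_lt continuous_const continuous_norm
      exact (hop.eventually_mem hnorm).mono fun w hw => hsupp i w (le_of_lt hw)
    rw [hev.fderiv_eq, fderiv_fun_const]
    simp
  rw [← MeasureTheory.setIntegral_eq_integral_of_forall_compl_eq_zero hvanish]
  have key := MeasureTheory.integral_divergence_of_hasFDerivAt_off_countable'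
    a b hle F (fun i x => fderiv ℝ (F i) x) ∅ countable_empty
    (fun i => (hF i).continuous.continuousOn)
    (fun x _ i => ((hF i).differentiable one_ne_zero x).hasFDerivAt)
    (by
      apply ContinuousOn.integrableOn_compact isCompact_Icc
      apply Continuous.continuousOn
      apply continuous_finset_sum
      intro i _
      exact (ContinuousLinearMap.apply ℝ ℝ (Pi.single i 1 : V3)).continuous.comp
        ((hF i).continuous_fderiv one_ne_zero))
  rw [key]
  apply Finset.sum_eq_zero
  intro i _
  have hface : ∀ (c : ℝ), |c| = M →
      ∀ x : Fin 2 → ℝ, F i (Fin.insertNth (α := fun _ => ℝ) i c x) = 0 := by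
    intro c hc x
    apply hsupp
    have e1 : Fin.insertNth (α := fun _ => ℝ) i c x i = c := Fin.insertNth_apply_same (α := fun _ => ℝ) i c x
    calc R ≤ M := hRM.le
      _ = |Fin.insertNth (α := fun _ => ℝ) i c x i| := by rw [e1, hc]
      _ ≤ ‖Fin.insertNth (α := fun _ => ℝ) i c x‖ := by
          simpa using norm_le_pi_norm (Fin.insertNth (α := fun _ => ℝ) i c x) i
  have h1 : (∫ x : Fin 2 → ℝ in Icc (a ∘ i.succAbove) (b ∘ i.succAbove),
      F i (i.insertNth (b i) x)) = 0 := by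
    rw [setIntegral_congr_fun measurableSet_Icc
      (fun x _ => hface M (abs_of_pos hM0) x : ∀ x ∈ Icc (a ∘ i.succAbove) (b ∘ i.succAbove),
        F i (i.insertNth (b i) x) = 0)]
    simp
  have h2 : (∫ x : Fin 2 → ℝ in Icc (a ∘ i.succAbove) (b ∘ i.succAbove),
      F i (i.insertNth (a i) x)) = 0 := by
    rw [setIntegral_congr_fun measurableSet_Icc
      (fun x _ => hface (-M) (by rw [abs_neg, abs_of_pos hM0]) x :
        ∀ x ∈ Icc (a ∘ i.succAbove) (b ∘ i.succAbove), F i (i.insertNth (a i) x) = 0)]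
    simp
  rw [h1, h2, sub_self]

lemma diff_coord (j : Fin 3) (v : V3) : DifferentiableAt ℝ (fun w : V3 => w j) v :=
  (ContinuousLinearMap.proj (R := ℝ) (φ := fun _ : Fin 3 => ℝ) j).differentiableAt

lemma pd_coord (i j : Fin 3) (v : V3) :
    fderiv ℝ (fun w : V3 => w j) v (Pi.single i 1) = if j = i then 1 else 0 := by
  have := (ContinuousLinearMap.proj (R := ℝ) (φ := fun _ : Fin 3 => ℝ) j).fderiv (x := v)
  rw [show (fun w : V3 => w j) = ⇑(ContinuousLinearMap.proj (R := ℝ) (φ := fun _ : Fin 3 => ℝ) j) from rfl,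
    this]
  simp [Pi.single_apply]

lemma pd_mul {g h : V3 → ℝ} {v : V3} (hg : DifferentiableAt ℝ g v)
    (hh : DifferentiableAt ℝ h v) (u : V3) :
    fderiv ℝ (fun w => g w * h w) v u
      = fderiv ℝ g v u * h v + g v * fderiv ℝ h v u := by
  rw [fderiv_fun_mul hg hh]; simp; ring

lemma diff_dot (v : V3) : DifferentiableAt ℝ (fun w : V3 => w ⬝ᵥ w) v := by
  have : (fun w : V3 => w ⬝ᵥ w) = fun w : V3 => ∑ j, w j * w j := rfl
  rw [this]
  exact DifferentiableAt.fun_sum fun j _ => (diff_coord j v).mul (diff_coord j v)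

lemma pd_dot (i : Fin 3) (v : V3) :
    fderiv ℝ (fun w : V3 => w ⬝ᵥ w) v (Pi.single i 1) = 2 * v i := by
  have h1 : (fun w : V3 => w ⬝ᵥ w) = fun w : V3 => ∑ j, w j * w j := rfl
  rw [h1, fderiv_fun_sum (A := fun j (w : V3) => w j * w j)
    (fun j _ => (diff_coord j v).mul (diff_coord j v))]
  rw [ContinuousLinearMap.sum_apply]
  have : ∀ j ∈ Finset.univ, fderiv ℝ (fun w : V3 => w j * w j) v (Pi.single i 1)
      = (if j = i then 1 else 0) * v j + v j * (if j = i then 1 else 0) := by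
    intro j _
    rw [pd_mul (diff_coord j v) (diff_coord j v), pd_coord]
  rw [Finset.sum_congr rfl this,
    Finset.sum_congr rfl (fun j (_ : j ∈ Finset.univ) =>
      show (if j = i then (1:ℝ) else 0) * v j + v j * (if j = i then 1 else 0)
          = (if j = i then 2 * v j else 0) by split <;> ring)]
  simp

lemma cross_comp_eq (B : V3) (j : Fin 3) :
    ∃ (j₁ j₂ : Fin 3), j₁ ≠ j ∧ j₂ ≠ j ∧
      (fun w : V3 => (crossProduct w B) j) = fun w : V3 => w j₁ * B j₂ - w j₂ * B j₁ := by
  fin_cases j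
  · exact ⟨1, 2, by decide, by decide, by funext w; simp [cross_apply]⟩
  · exact ⟨2, 0, by decide, by decide, by funext w; simp [cross_apply]⟩
  · exact ⟨0, 1, by decide, by decide, by funext w; simp [cross_apply]⟩

lemma diff_cross (B : V3) (j : Fin 3) (v : V3) :
    DifferentiableAt ℝ (fun w : V3 => (crossProduct w B) j) v := by
  obtain ⟨j₁, j₂, _, _, h⟩ := cross_comp_eq B j
  rw [h]
  exact ((diff_coord j₁ v).mul (differentiableAt_const _)).sub
    ((diff_coord j₂ v).mul (differentiableAt_const _))

lemma pd_cross_same (B : V3) (i : Fin 3) (v : V3) :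
    fderiv ℝ (fun w : V3 => (crossProduct w B) i) v (Pi.single i 1) = 0 := by
  obtain ⟨j₁, j₂, h₁, h₂, h⟩ := cross_comp_eq B i
  rw [h]
  have d1 : DifferentiableAt ℝ (fun w : V3 => w j₁ * B j₂) v :=
    (diff_coord j₁ v).mul (differentiableAt_const _)
  have d2 : DifferentiableAt ℝ (fun w : V3 => w j₂ * B j₁) v :=
    (diff_coord j₂ v).mul (differentiableAt_const _)
  rw [fderiv_fun_sub d1 d2, ContinuousLinearMap.sub_apply,
    pd_mul (diff_coord j₁ v) (differentiableAt_const _),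
    pd_mul (diff_coord j₂ v) (differentiableAt_const _),
    pd_coord, pd_coord]
  simp [h₁, h₂, fderiv_fun_const]

lemma diff_g (c B : V3) (i : Fin 3) (v : V3) :
    DifferentiableAt ℝ (fun w : V3 => c i + (crossProduct w B) i) v :=
  (differentiableAt_const _).add (diff_cross B i v)

lemma diff_psi (c B : V3) (i : Fin 3) (v : V3) :
    DifferentiableAt ℝ (fun w : V3 => (w ⬝ᵥ w) * (c i + (crossProduct w B) i)) v :=
  (diff_dot v).mul (diff_g c B i v)

lemma pd_psi (c B : V3) (i : Fin 3) (v : V3) :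
    fderiv ℝ (fun w : V3 => (w ⬝ᵥ w) * (c i + (crossProduct w B) i)) v (Pi.single i 1)
      = 2 * v i * (c i + (crossProduct v B) i) := by
  rw [pd_mul (diff_dot v) (diff_g c B i v), pd_dot]
  have : fderiv ℝ (fun w : V3 => c i + (crossProduct w B) i) v (Pi.single i 1) = 0 := by
    rw [fderiv_const_add]
    exact pd_cross_same B i v
  rw [this]
  ring

/-- The divergence identity: `div_v ((v⬝v) f (c + v×B)) = (v⬝v) (c+v×B)·∇f + 2 f (c·v)`. -/
lemma sum_fderiv_prod (f : V3 → ℝ) (hf : ∀ w, DifferentiableAt ℝ f w) (c B v : V3) :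
    ∑ i, fderiv ℝ (fun w : V3 => f w * ((w ⬝ᵥ w) * (c i + (crossProduct w B) i))) v
        (Pi.single i 1)
      = ((c + crossProduct v B) ⬝ᵥ (fun i => fderiv ℝ f v (Pi.single i 1))) * (v ⬝ᵥ v)
        + f v * (2 * (c ⬝ᵥ v)) := by
  have step : ∀ i ∈ Finset.univ,
      fderiv ℝ (fun w : V3 => f w * ((w ⬝ᵥ w) * (c i + (crossProduct w B) i))) v
          (Pi.single i 1)
        = fderiv ℝ f v (Pi.single i 1) * ((v ⬝ᵥ v) * (c i + (crossProduct v B) i))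
          + f v * (2 * v i * (c i + (crossProduct v B) i)) := by
    intro i _
    rw [pd_mul (hf v) (diff_psi c B i v), pd_psi]
  rw [Finset.sum_congr rfl step, Finset.sum_add_distrib]
  have e1 : ∑ i, fderiv ℝ f v (Pi.single i 1) * ((v ⬝ᵥ v) * (c i + (crossProduct v B) i))
      = ((c + crossProduct v B) ⬝ᵥ (fun i => fderiv ℝ f v (Pi.single i 1))) * (v ⬝ᵥ v) := by
    have expand : ∀ i ∈ Finset.univ,
        fderiv ℝ f v (Pi.single i 1) * ((v ⬝ᵥ v) * (c i + (crossProduct v B) i))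
          = ((c + crossProduct v B) i * fderiv ℝ f v (Pi.single i 1)) * (v ⬝ᵥ v) := fun i _ => by
      simp only [Pi.add_apply]; ring
    rw [Finset.sum_congr rfl expand, ← Finset.sum_mul]
    rfl
  have e2 : ∑ i, f v * (2 * v i * (c i + (crossProduct v B) i)) = f v * (2 * (c ⬝ᵥ v)) := by
    have h0 : ∑ i : Fin 3, v i * (crossProduct v B) i = 0 := dot_self_cross v B
    have expand : ∀ i ∈ Finset.univ, f v * (2 * v i * (c i + (crossProduct v B) i))
        = f v * 2 * (c i * v i) + f v * 2 * (v i * (crossProduct v B) i) := fun i _ => by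
      ring
    rw [Finset.sum_congr rfl expand, Finset.sum_add_distrib, ← Finset.mul_sum, ← Finset.mul_sum,
      h0, mul_zero, add_zero]
    have : c ⬝ᵥ v = ∑ i, c i * v i := rfl
    rw [this]
    ring
  rw [e1, e2]


lemma slice_v_contDiff {f : V3 → V3 → ℝ}
    (hsm : ContDiff ℝ (⊤ : ℕ∞) fun p : V3 × V3 => f p.1 p.2) (x : V3) :
    ContDiff ℝ (⊤ : ℕ∞) (fun w => f x w) := hsm.comp (contDiff_const.prodMk contDiff_id)

lemma slice_x_contDiff {f : V3 → V3 → ℝ}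
    (hsm : ContDiff ℝ (⊤ : ℕ∞) fun p : V3 × V3 => f p.1 p.2) (v : V3) :
    ContDiff ℝ (⊤ : ℕ∞) (fun y => f y v) := hsm.comp (contDiff_id.prodMk contDiff_const)

lemma contDiff_coord (j : Fin 3) : ContDiff ℝ (⊤ : ℕ∞) (fun w : V3 => w j) :=
  (ContinuousLinearMap.proj (R := ℝ) (φ := fun _ : Fin 3 => ℝ) j).contDiff

lemma contDiff_dot : ContDiff ℝ (⊤ : ℕ∞) (fun w : V3 => w ⬝ᵥ w) := by
  have : (fun w : V3 => w ⬝ᵥ w) = fun w : V3 => ∑ j, w j * w j := rfl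
  rw [this]
  exact ContDiff.sum fun j _ => (contDiff_coord j).mul (contDiff_coord j)

lemma contDiff_crossc (B : V3) (j : Fin 3) :
    ContDiff ℝ (⊤ : ℕ∞) (fun w : V3 => (crossProduct w B) j) := by
  obtain ⟨j₁, j₂, _, _, h⟩ := cross_comp_eq B j
  rw [h]
  exact ((contDiff_coord j₁).mul contDiff_const).sub ((contDiff_coord j₂).mul contDiff_const)

lemma gradX_rep {f : V3 → V3 → ℝ} (hsm : ContDiff ℝ (⊤ : ℕ∞) fun p : V3 × V3 => f p.1 p.2)
    (x v : V3) (i : Fin 3) :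
    gradX f x v i
      = fderiv ℝ (fun p : V3 × V3 => f p.1 p.2) (x, v) (Pi.single i 1, 0) := by
  have hD : HasFDerivAt (fun p : V3 × V3 => f p.1 p.2)
      (fderiv ℝ (fun p : V3 × V3 => f p.1 p.2) (x, v)) (x, v) :=
    ((hsm.differentiable (by simp)) (x, v)).hasFDerivAt
  have hc : HasFDerivAt (fun y => f y v)
      ((fderiv ℝ (fun p : V3 × V3 => f p.1 p.2) (x, v)).comp
        (ContinuousLinearMap.inl ℝ V3 V3)) x :=
    by have := hD.comp x (hasFDerivAt_prodMk_left (𝕜 := ℝ) x v); exact this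
  show fderiv ℝ (fun y => f y v) x (Pi.single i 1) = _
  rw [hc.fderiv]
  rfl

lemma gradV_rep {f : V3 → V3 → ℝ} (hsm : ContDiff ℝ (⊤ : ℕ∞) fun p : V3 × V3 => f p.1 p.2)
    (x v : V3) (i : Fin 3) :
    gradV f x v i
      = fderiv ℝ (fun p : V3 × V3 => f p.1 p.2) (x, v) (0, Pi.single i 1) := by
  have hD : HasFDerivAt (fun p : V3 × V3 => f p.1 p.2)
      (fderiv ℝ (fun p : V3 × V3 => f p.1 p.2) (x, v)) (x, v) :=
    ((hsm.differentiable (by simp)) (x, v)).hasFDerivAt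
  have hc : HasFDerivAt (fun w => f x w)
      ((fderiv ℝ (fun p : V3 × V3 => f p.1 p.2) (x, v)).comp
        (ContinuousLinearMap.inr ℝ V3 V3)) v :=
    hD.comp v (hasFDerivAt_prodMk_right x v)
  show fderiv ℝ (fun w => f x w) v (Pi.single i 1) = _
  rw [hc.fderiv]
  rfl

lemma cont_gradX {f : V3 → V3 → ℝ} (hsm : ContDiff ℝ (⊤ : ℕ∞) fun p : V3 × V3 => f p.1 p.2)
    (i : Fin 3) : Continuous fun p : V3 × V3 => gradX f p.1 p.2 i := by
  have h : (fun p : V3 × V3 => gradX f p.1 p.2 i)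
      = fun p => fderiv ℝ (fun p : V3 × V3 => f p.1 p.2) p ((Pi.single i 1 : V3), (0 : V3)) := by
    funext p; exact gradX_rep hsm p.1 p.2 i
  rw [h]
  exact (ContinuousLinearMap.apply ℝ ℝ ((Pi.single i 1 : V3), (0 : V3))).continuous.comp
    (hsm.continuous_fderiv (by simp))

lemma cont_gradV {f : V3 → V3 → ℝ} (hsm : ContDiff ℝ (⊤ : ℕ∞) fun p : V3 × V3 => f p.1 p.2)
    (i : Fin 3) : Continuous fun p : V3 × V3 => gradV f p.1 p.2 i := by
  have h : (fun p : V3 × V3 => gradV f p.1 p.2 i)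
      = fun p => fderiv ℝ (fun p : V3 × V3 => f p.1 p.2) p ((0 : V3), (Pi.single i 1 : V3)) := by
    funext p; exact gradV_rep hsm p.1 p.2 i
  rw [h]
  exact (ContinuousLinearMap.apply ℝ ℝ ((0 : V3), (Pi.single i 1 : V3))).continuous.comp
    (hsm.continuous_fderiv (by simp))

lemma gradX_zero {f : V3 → V3 → ℝ} {R : ℝ} (hsupp : ∀ x v : V3, R ≤ ‖v‖ → f x v = 0)
    {v : V3} (hv : R ≤ ‖v‖) (x : V3) (i : Fin 3) : gradX f x v i = 0 := by
  have h : (fun y => f y v) = fun _ => (0:ℝ) := funext fun y => hsupp y v hv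
  show fderiv ℝ (fun y => f y v) x (Pi.single i 1) = 0
  rw [h, fderiv_fun_const]
  simp

lemma gradV_zero {f : V3 → V3 → ℝ} {R : ℝ} (hsupp : ∀ x v : V3, R ≤ ‖v‖ → f x v = 0)
    {v : V3} (hv : R < ‖v‖) (x : V3) (i : Fin 3) : gradV f x v i = 0 := by
  have hop : IsOpen {w : V3 | R < ‖w‖} := isOpen_lt continuous_const continuous_norm
  have hev : (fun w => f x w) =ᶠ[nhds v] (fun _ => (0:ℝ)) :=
    (hop.eventually_mem hv).mono fun w hw => hsupp x w (le_of_lt hw)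
  show fderiv ℝ (fun w => f x w) v (Pi.single i 1) = 0
  rw [hev.fderiv_eq, fderiv_fun_const]
  simp

lemma integrable_of_supp {E : Type*} [NormedAddCommGroup E] [NormedSpace ℝ E]
    (g : V3 → E) (hg : Continuous g) (R : ℝ) (h0 : ∀ v : V3, R < ‖v‖ → g v = 0) :
    Integrable g := by
  apply hg.integrable_of_hasCompactSupport
  apply HasCompactSupport.of_support_subset_isCompact
    (isCompact_closedBall (0 : V3) (max R 0))
  intro v hv
  rw [Metric.mem_closedBall, dist_zero_right]
  by_contra hc
  push_neg at hc
  exact (Function.mem_support.mp hv) (h0 v (lt_of_le_of_lt (le_max_left _ _) hc))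

lemma integrable_prod_box (L R : ℝ) (g : V3 → V3 → ℝ)
    (hg : Continuous fun p : V3 × V3 => g p.1 p.2)
    (h0 : ∀ x v : V3, R < ‖v‖ → g x v = 0) :
    Integrable (fun p : V3 × V3 => g p.1 p.2) ((volume.restrict (box L)).prod volume) := by
  rw [Measure.restrict_prod_eq_prod_univ]
  set K : Set (V3 × V3) := (box L) ×ˢ Metric.closedBall (0:V3) (max R 0) with hK
  have hKc : IsCompact K := isCompact_Icc.prod (isCompact_closedBall _ _)
  have hKm : MeasurableSet K := measurableSet_Icc.prod measurableSet_closedBall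
  have h1 : IntegrableOn (fun p : V3 × V3 => g p.1 p.2) K :=
    hg.continuousOn.integrableOn_compact hKc
  have hTm : MeasurableSet (((box L) ×ˢ (univ : Set V3)) \ K) :=
    (measurableSet_Icc.prod MeasurableSet.univ).diff hKm
  have h2 : IntegrableOn (fun p : V3 × V3 => g p.1 p.2) (((box L) ×ˢ (univ : Set V3)) \ K) := by
    rw [integrableOn_congr_fun (g := fun _ => (0:ℝ)) ?_ hTm]
    · exact integrableOn_zero
    · rintro p ⟨⟨hp1, -⟩, hp2⟩
      have hnb : p.2 ∉ Metric.closedBall (0:V3) (max R 0) := fun h => hp2 ⟨hp1, h⟩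
      rw [Metric.mem_closedBall, dist_zero_right, not_le] at hnb
      exact h0 p.1 p.2 (lt_of_le_of_lt (le_max_left _ _) hnb)
  exact (h1.union h2).mono_set (fun p hp => by
    by_cases h : p ∈ K
    · exact Or.inl h
    · exact Or.inr ⟨hp, h⟩)

lemma termA (L : ℝ) (hL : 0 ≤ L) (f : V3 → V3 → ℝ)
    (hsm : ContDiff ℝ (⊤ : ℕ∞) fun p : V3 × V3 => f p.1 p.2)
    (hper : ∀ (x v : V3) (i : Fin 3), f (x + L • (Pi.single i (1:ℝ) : V3)) v = f x v)
    (v : V3) :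
    ∫ x in box L, (v ⬝ᵥ gradX f x v) * (v ⬝ᵥ v) = 0 := by
  have key := integral_box_div_eq_zero L hL
    (fun i y => f y v * ((v ⬝ᵥ v) * v i))
    (fun i => ((slice_x_contDiff hsm v).mul contDiff_const).of_le (by simp))
    (fun i x j => by simp only [hper])
  have hpt : ∀ x : V3, (v ⬝ᵥ gradX f x v) * (v ⬝ᵥ v)
      = ∑ i, fderiv ℝ (fun y => f y v * ((v ⬝ᵥ v) * v i)) x (Pi.single i 1) := by
    intro x
    have hdiff : DifferentiableAt ℝ (fun y => f y v) x :=
      ((slice_x_contDiff hsm v).differentiable (by simp)) x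
    have hterm : ∀ i ∈ Finset.univ,
        fderiv ℝ (fun y => f y v * ((v ⬝ᵥ v) * v i)) x (Pi.single i 1)
          = fderiv ℝ (fun y => f y v) x (Pi.single i 1) * ((v ⬝ᵥ v) * v i) := by
      intro i _
      rw [pd_mul hdiff (differentiableAt_const _), fderiv_fun_const]
      simp
    rw [Finset.sum_congr rfl hterm]
    show (∑ i, v i * gradX f x v i) * (v ⬝ᵥ v) = _
    rw [Finset.sum_mul]
    exact Finset.sum_congr rfl fun i _ => by
      show v i * gradX f x v i * (v ⬝ᵥ v) = gradX f x v i * ((v ⬝ᵥ v) * v i)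
      ring
  refine Eq.trans ?_ key
  exact setIntegral_congr_fun measurableSet_Icc fun x _ => hpt x

lemma termB (f : V3 → V3 → ℝ)
    (hsm : ContDiff ℝ (⊤ : ℕ∞) fun p : V3 × V3 => f p.1 p.2)
    (R : ℝ) (hsupp : ∀ x v : V3, R ≤ ‖v‖ → f x v = 0) (x c B : V3) :
    (∫ v : V3, ((c + crossProduct v B) ⬝ᵥ gradV f x v) * (v ⬝ᵥ v))
      = - ∫ v : V3, f x v * (2 * (c ⬝ᵥ v)) := by
  have hslice := slice_v_contDiff hsm x
  have hFi : ∀ i : Fin 3, ContDiff ℝ 1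
      (fun w : V3 => f x w * ((w ⬝ᵥ w) * (c i + (crossProduct w B) i))) :=
    fun i => (hslice.mul (contDiff_dot.mul
      (contDiff_const.add (contDiff_crossc B i)))).of_le (by simp)
  have key := integral_div_eq_zero_of_support R _ hFi
    (fun i v hv => by
      show f x v * ((v ⬝ᵥ v) * (c i + (crossProduct v B) i)) = 0
      rw [hsupp x v hv, zero_mul])
  have hpt : ∀ v : V3,
      (∑ i, fderiv ℝ (fun w : V3 => f x w * ((w ⬝ᵥ w) * (c i + (crossProduct w B) i))) v
        (Pi.single i 1))
      = ((c + crossProduct v B) ⬝ᵥ gradV f x v) * (v ⬝ᵥ v) + f x v * (2 * (c ⬝ᵥ v)) :=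
    fun v => sum_fderiv_prod (fun w => f x w)
      (fun w => ((hslice.differentiable (by simp)) w)) c B v
  have int1 : Integrable
      (fun v : V3 => ((c + crossProduct v B) ⬝ᵥ gradV f x v) * (v ⬝ᵥ v)) := by
    apply integrable_of_supp _ ?_ R ?_
    · apply Continuous.mul
      · show Continuous fun v : V3 => ∑ i, (c + crossProduct v B) i * gradV f x v i
        refine continuous_finset_sum _ fun i _ => Continuous.mul ?_ ?_
        · show Continuous fun v : V3 => c i + (crossProduct v B) i
          exact continuous_const.add (contDiff_crossc B i).continuous
        · exact (cont_gradV hsm i).comp (Continuous.prodMk_right x)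
      · exact contDiff_dot.continuous
    · intro v hv
      have hg : gradV f x v = 0 := funext fun i => gradV_zero hsupp hv x i
      show ((c + crossProduct v B) ⬝ᵥ gradV f x v) * (v ⬝ᵥ v) = 0
      rw [hg, dotProduct_zero, zero_mul]
  have int2 : Integrable (fun v : V3 => f x v * (2 * (c ⬝ᵥ v))) := by
    apply integrable_of_supp _ ?_ R ?_
    · apply Continuous.mul
      · exact hslice.continuous
      · apply Continuous.mul continuous_const
        show Continuous fun v : V3 => ∑ i, c i * v i
        exact continuous_finset_sum _ fun i _ =>
          Continuous.mul continuous_const (continuous_apply i)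
    · intro v hv
      rw [hsupp x v hv.le, zero_mul]
  have key2 : (∫ v : V3, (((c + crossProduct v B) ⬝ᵥ gradV f x v) * (v ⬝ᵥ v)
      + f x v * (2 * (c ⬝ᵥ v)))) = 0 := by
    refine Eq.trans ?_ key
    exact integral_congr_ae (Filter.EventuallyEq.symm (Filter.EventuallyEq.of_eq (funext hpt)))
  rw [integral_add int1 int2] at key2
  linarith

end VlasovAux

/-- Kinetic energy balance of the Vlasov step (key step in the proof of
Theorem 2.1): the magnetic force does no work. -/
theorem vlasov_step_kinetic_energy_balance
    (L Δt : ℝ) (hL : 0 < L) (hΔt : 0 < Δt)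
    (f0 fh f1 : V3 → V3 → ℝ) (En E1 Bbar : V3 → V3)
    (hf0 : IsPhase L f0) (hfh : IsPhase L fh) (hf1 : IsPhase L f1)
    (hEn : IsSpatialVF L En) (hE1 : IsSpatialVF L E1) (hBbar : IsSpatialVF L Bbar)
    (hVlasov : ∀ x v : V3,
      (f1 x v - f0 x v) / Δt + v ⬝ᵥ gradX fh x v
        + ((2:ℝ)⁻¹ • (En x + E1 x) + crossProduct v (Bbar x))
            ⬝ᵥ gradV fh x v = 0) :
    (∫ x in box L, ∫ v : V3, (f1 x v - f0 x v) * (v ⬝ᵥ v))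
      = Δt * ∫ x in box L, (En x + E1 x) ⬝ᵥ Jcur fh x := by
  classical
  obtain ⟨h0sm, h0per, R0, hR0⟩ := hf0
  obtain ⟨hhsm, hhper, Rh, hRh⟩ := hfh
  obtain ⟨h1sm, h1per, R1, hR1⟩ := hf1
  set R : ℝ := max (max R0 R1) Rh with hRdef
  have hRh' : ∀ x v : V3, R ≤ ‖v‖ → fh x v = 0 := fun x v hv =>
    hRh x v (le_trans (le_max_right _ _) hv)
  set A : V3 → V3 → ℝ := fun x v => (v ⬝ᵥ gradX fh x v) * (v ⬝ᵥ v) with hAdef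
  set C : V3 → V3 → ℝ := fun x v => fh x v * ((En x + E1 x) ⬝ᵥ v) with hCdef
  have hcontA : Continuous fun p : V3 × V3 => A p.1 p.2 := by
    apply Continuous.mul
    · show Continuous fun p : V3 × V3 => ∑ i, p.2 i * gradX fh p.1 p.2 i
      refine continuous_finset_sum _ fun i _ => Continuous.mul ?_ (cont_gradX hhsm i)
      exact (continuous_apply i).comp continuous_snd
    · show Continuous fun p : V3 × V3 => ∑ i, p.2 i * p.2 i
      refine continuous_finset_sum _ fun i _ => Continuous.mul ?_ ?_ <;>
        exact (continuous_apply i).comp continuous_snd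
  have hcontC : Continuous fun p : V3 × V3 => C p.1 p.2 := by
    apply Continuous.mul
    · exact hhsm.continuous
    · show Continuous fun p : V3 × V3 => ∑ i, (En p.1 + E1 p.1) i * p.2 i
      refine continuous_finset_sum _ fun i _ => Continuous.mul ?_ ?_
      · exact (continuous_apply i).comp ((hEn.1.continuous.add hE1.1.continuous).comp
          continuous_fst)
      · exact (continuous_apply i).comp continuous_snd
  have hsuppA : ∀ x v : V3, R < ‖v‖ → A x v = 0 := by
    intro x v hv
    have hg : gradX fh x v = 0 := funext fun i => gradX_zero hRh' hv.le x i
    show (v ⬝ᵥ gradX fh x v) * (v ⬝ᵥ v) = 0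
    rw [hg, dotProduct_zero, zero_mul]
  have hsuppC : ∀ x v : V3, R < ‖v‖ → C x v = 0 := by
    intro x v hv
    show fh x v * ((En x + E1 x) ⬝ᵥ v) = 0
    rw [hRh' x v hv.le, zero_mul]
  have hintA : Integrable (fun p : V3 × V3 => A p.1 p.2)
      ((volume.restrict (box L)).prod volume) := integrable_prod_box L R A hcontA hsuppA
  have hintC : Integrable (fun p : V3 × V3 => C p.1 p.2)
      ((volume.restrict (box L)).prod volume) := integrable_prod_box L R C hcontC hsuppC
  have hintA_x : ∀ x : V3, Integrable (A x) := fun x =>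
    integrable_of_supp (A x) (hcontA.comp (Continuous.prodMk_right x)) R (hsuppA x)
  have hintC_x : ∀ x : V3, Integrable (C x) := fun x =>
    integrable_of_supp (C x) (hcontC.comp (Continuous.prodMk_right x)) R (hsuppC x)
  have hintB_x : ∀ x : V3, Integrable (fun v : V3 =>
      (((2:ℝ)⁻¹ • (En x + E1 x) + crossProduct v (Bbar x)) ⬝ᵥ gradV fh x v) * (v ⬝ᵥ v)) := by
    intro x
    apply integrable_of_supp _ ?_ R ?_
    · apply Continuous.mul
      · show Continuous fun v : V3 =>
          ∑ i, ((2:ℝ)⁻¹ • (En x + E1 x) + crossProduct v (Bbar x)) i * gradV fh x v i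
        refine continuous_finset_sum _ fun i _ => Continuous.mul ?_ ?_
        · show Continuous fun v : V3 =>
            ((2:ℝ)⁻¹ • (En x + E1 x)) i + (crossProduct v (Bbar x)) i
          exact continuous_const.add (contDiff_crossc (Bbar x) i).continuous
        · exact (cont_gradV hhsm i).comp (Continuous.prodMk_right x)
      · exact contDiff_dot.continuous
    · intro v hv
      have hg : gradV fh x v = 0 := funext fun i => gradV_zero hRh' hv x i
      show ((((2:ℝ)⁻¹ • (En x + E1 x) + crossProduct v (Bbar x))) ⬝ᵥ gradV fh x v)
        * (v ⬝ᵥ v) = 0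
      rw [hg, dotProduct_zero, zero_mul]
  -- inner identity at each x
  have inner_eq : ∀ x : V3, (∫ v : V3, (f1 x v - f0 x v) * (v ⬝ᵥ v))
      = -Δt * (∫ v : V3, A x v) + Δt * (∫ v : V3, C x v) := by
    intro x
    have hpt : ∀ v : V3, (f1 x v - f0 x v) * (v ⬝ᵥ v)
        = -Δt * A x v + -Δt * ((((2:ℝ)⁻¹ • (En x + E1 x) + crossProduct v (Bbar x))
            ⬝ᵥ gradV fh x v) * (v ⬝ᵥ v)) := by
      intro v
      have h := hVlasov x v
      have hne : Δt ≠ 0 := ne_of_gt hΔt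
      have h3 : (f1 x v - f0 x v) / Δt = -(v ⬝ᵥ gradX fh x v
          + ((2:ℝ)⁻¹ • (En x + E1 x) + crossProduct v (Bbar x)) ⬝ᵥ gradV fh x v) := by
        linarith
      have h2 : f1 x v - f0 x v = -Δt * (v ⬝ᵥ gradX fh x v
          + ((2:ℝ)⁻¹ • (En x + E1 x) + crossProduct v (Bbar x)) ⬝ᵥ gradV fh x v) := by
        rw [div_eq_iff hne] at h3
        linear_combination h3
      rw [h2]
      show -Δt * (v ⬝ᵥ gradX fh x v
          + ((2:ℝ)⁻¹ • (En x + E1 x) + crossProduct v (Bbar x)) ⬝ᵥ gradV fh x v) * (v ⬝ᵥ v)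
        = -Δt * ((v ⬝ᵥ gradX fh x v) * (v ⬝ᵥ v)) + -Δt * ((((2:ℝ)⁻¹ • (En x + E1 x)
            + crossProduct v (Bbar x)) ⬝ᵥ gradV fh x v) * (v ⬝ᵥ v))
      ring
    rw [integral_congr_ae (Filter.EventuallyEq.of_eq (funext hpt)),
      integral_add ((hintA_x x).const_mul (-Δt)) ((hintB_x x).const_mul (-Δt)),
      integral_const_mul, integral_const_mul,
      termB fh hhsm R hRh' x ((2:ℝ)⁻¹ • (En x + E1 x)) (Bbar x)]
    have hCeq : (∫ v : V3, fh x v * (2 * (((2:ℝ)⁻¹ • (En x + E1 x)) ⬝ᵥ v)))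
        = ∫ v : V3, C x v := by
      refine integral_congr_ae (Filter.EventuallyEq.of_eq (funext fun v => ?_))
      show fh x v * (2 * (((2:ℝ)⁻¹ • (En x + E1 x)) ⬝ᵥ v))
        = fh x v * ((En x + E1 x) ⬝ᵥ v)
      rw [smul_dotProduct, smul_eq_mul]
      ring
    rw [hCeq]
    ring
  -- rewrite the outer integral
  have houter : (∫ x in box L, ∫ v : V3, (f1 x v - f0 x v) * (v ⬝ᵥ v))
      = ∫ x in box L, (-Δt * (∫ v : V3, A x v) + Δt * (∫ v : V3, C x v)) :=
    setIntegral_congr_fun measurableSet_Icc fun x _ => inner_eq x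
  have hIA_int : Integrable (fun x => ∫ v : V3, A x v) (volume.restrict (box L)) :=
    hintA.integral_prod_left
  have hIC_int : Integrable (fun x => ∫ v : V3, C x v) (volume.restrict (box L)) :=
    hintC.integral_prod_left
  have hIA : (∫ x in box L, ∫ v : V3, A x v) = 0 := by
    have hswap := MeasureTheory.integral_integral_swap
      (f := A) (μ := volume.restrict (box L)) (ν := volume) hintA
    rw [hswap]
    have hinner : ∀ v : V3, (∫ x in box L, A x v) = 0 := fun v =>
      termA L hL.le fh hhsm hhper v
    rw [integral_congr_ae (Filter.EventuallyEq.of_eq (funext hinner)), integral_zero]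
  have hJ : ∀ x : V3, (En x + E1 x) ⬝ᵥ Jcur fh x = ∫ v : V3, C x v := by
    intro x
    have hslicec : Continuous fun v : V3 => fh x v :=
      hhsm.continuous.comp (Continuous.prodMk_right x)
    have hint_smul : Integrable (fun v : V3 => fh x v • v) := by
      apply integrable_of_supp _ (hslicec.smul continuous_id) R
      intro v hv
      show fh x v • v = 0
      rw [hRh' x v hv.le, zero_smul]
    have hint_i : ∀ i : Fin 3, Integrable (fun v : V3 => fh x v * v i) := by
      intro i
      apply integrable_of_supp _ (hslicec.mul (continuous_apply i)) R
      intro v hv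
      show fh x v * v i = 0
      rw [hRh' x v hv.le, zero_mul]
    have hcomp : ∀ i : Fin 3, Jcur fh x i = ∫ v : V3, fh x v * v i := by
      intro i
      have h := (ContinuousLinearMap.proj (R := ℝ) (φ := fun _ : Fin 3 => ℝ)
        i).integral_comp_comm hint_smul
      have h2 : (∫ v : V3, fh x v • v) i = ∫ v : V3, (fh x v • v) i := h.symm
      rw [Jcur]
      rw [h2]
      exact integral_congr_ae (Filter.EventuallyEq.of_eq (funext fun v => by
        show (fh x v • v) i = fh x v * v i
        rw [Pi.smul_apply, smul_eq_mul]))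
    calc (En x + E1 x) ⬝ᵥ Jcur fh x
        = ∑ i, (En x + E1 x) i * Jcur fh x i := rfl
      _ = ∑ i, ∫ v : V3, (En x + E1 x) i * (fh x v * v i) := by
          refine Finset.sum_congr rfl fun i _ => ?_
          rw [hcomp i, ← integral_const_mul]
      _ = ∫ v : V3, ∑ i, (En x + E1 x) i * (fh x v * v i) :=
          (integral_finset_sum _ fun i _ => (hint_i i).const_mul _).symm
      _ = ∫ v : V3, C x v := by
          refine integral_congr_ae (Filter.EventuallyEq.of_eq (funext fun v => ?_))
          show ∑ i, (En x + E1 x) i * (fh x v * v i) = fh x v * ((En x + E1 x) ⬝ᵥ v)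
          have : (En x + E1 x) ⬝ᵥ v = ∑ i, (En x + E1 x) i * v i := rfl
          rw [this, Finset.mul_sum]
          exact Finset.sum_congr rfl fun i _ => by ring
  rw [houter,
    integral_add (hIA_int.const_mul (-Δt)) (hIC_int.const_mul Δt),
    integral_const_mul, integral_const_mul, hIA, mul_zero, zero_add]
  congr 1
  exact (setIntegral_congr_fun measurableSet_Icc fun x _ => (hJ x)).symm
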